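/- Let p and q be real numbers with 0 < q < p ≤ 1, let n be a positive integer, and let u, v be real numbers such that u + v + 1 > 0, v + i ≠ 0 for every integer i ≥ 1, and u + v + i ≠ 0 for 1 ≤ i ≤ n. Then the series Σ_{κ=0}^{∞} C_{p,q}(−n,κ) · p^{−(n+κ)(u−κ)} · q^{κ(v+n+κ)} · [u]_{κ,p,q} / Π_{i=1}^{n+κ}[v+i]_{p,q} converges and its sum equals 1/Π_{i=1}^{n}[u+v+i]_{p,q}. -/

import Mathlib

/-- The (p,q)-deformed number `[x]_{p,q} = (p^x - q^x)/(p - q)` (real powers). -/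
noncomputable def pqNum (p q x : ℝ) : ℝ := (p ^ x - q ^ x) / (p - q)

/-- The (p,q)-factorial `[n]_{p,q}! = ∏_{i=1}^n [i]_{p,q}`. -/
noncomputable def pqFac (p q : ℝ) (n : ℕ) : ℝ := ∏ i ∈ Finset.range n, pqNum p q ((i : ℝ) + 1)

/-- The κ-th order (p,q)-factorial `[x]_{κ,p,q} = ∏_{v=0}^{κ-1} [x-v]_{p,q}`. -/
noncomputable def pqFacOrd (p q x : ℝ) (j : ℕ) : ℝ := ∏ v ∈ Finset.range j, pqNum p q (x - (v : ℝ))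

/-- The (p,q)-binomial coefficient with real upper argument: `C_{p,q}(x,κ) = [x]_{κ,p,q}/[κ]_{p,q}!`. -/
noncomputable def pqBinomR (p q x : ℝ) (k : ℕ) : ℝ := pqFacOrd p q x k / pqFac p q k

/-!
Induction on `n`; for `n = 0` only the term `κ = 0` survives. Write `W n κ` for the `κ`-th
term and `[x]` for `[x]_{p,q}`. The Pascal rule for `C_{p,q}(-n, κ)` gives the contiguous relation
`W n (κ+1) = p^(u-κ-1) [v+n+κ+2] W (n+1) (κ+1) + q^(v+n+κ+1) [u-κ] W (n+1) κ`,
so `W (n+1) κ` enters `W n κ` with the coefficient `p^(u-κ) [v+n+κ+1]` and `W n (κ+1)` with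
`q^(v+n+κ+1) [u-κ]`. By the addition formula `[a+b] = p^a [b] + q^b [a]` these add up to
`[u+v+n+1]`, hence `∑ W n = [u+v+n+1] ∑ W (n+1)`. All series converge by the ratio test: the
ratio of consecutive terms tends to `(q/p)^(u+v+1) < 1`.
-/

open Real Filter Finset Topology

section Rpow

variable {p : ℝ}

theorem rpow_add_of_eq (hp : 0 < p) {a b c : ℝ} (h : c = a + b) :
    p ^ c = p ^ a * p ^ b := by
  rw [h, rpow_add hp]

theorem rpow_sub_of_eq (hp : 0 < p) {a b c : ℝ} (h : c = a - b) :
    p ^ c = p ^ a / p ^ b := by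
  rw [h, rpow_sub hp]

end Rpow

section PQNumber

variable {p q : ℝ}

theorem pqNum_add (hp : 0 < p) (hq : 0 < q) (a b : ℝ) :
    pqNum p q (a + b) = p ^ a * pqNum p q b + q ^ b * pqNum p q a := by
  simp only [pqNum, rpow_add hp, rpow_add hq]
  ring

theorem pqNum_pos (hq : 0 < q) (hqp : q < p) {x : ℝ} (hx : 0 < x) : 0 < pqNum p q x :=
  div_pos (sub_pos.2 (rpow_lt_rpow hq.le hqp hx)) (sub_pos.2 hqp)

theorem pqNum_ne_zero (hq : 0 < q) (hqp : q < p) {x : ℝ} (hx : x ≠ 0) : pqNum p q x ≠ 0 := by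
  refine div_ne_zero (sub_ne_zero.2 fun h => hqp.ne' ?_) (sub_ne_zero.2 hqp.ne')
  exact (rpow_left_inj (hq.trans hqp).le hq.le hx).1 h

theorem pqFac_succ (k : ℕ) : pqFac p q (k + 1) = pqFac p q k * pqNum p q (k + 1) :=
  prod_range_succ _ _

theorem pqFacOrd_succ (x : ℝ) (k : ℕ) :
    pqFacOrd p q x (k + 1) = pqFacOrd p q x k * pqNum p q (x - k) :=
  prod_range_succ _ _

theorem pqFacOrd_succ' (x : ℝ) (k : ℕ) :
    pqFacOrd p q (x + 1) (k + 1) = pqNum p q (x + 1) * pqFacOrd p q x k := by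
  rw [pqFacOrd, prod_range_succ', mul_comm, Nat.cast_zero, sub_zero, pqFacOrd]
  congr 1
  exact prod_congr rfl fun i _ => by push_cast; ring_nf

theorem pqBinomR_succ_succ (hq : 0 < q) (hqp : q < p) (x : ℝ) (k : ℕ) :
    pqBinomR p q (x + 1) (k + 1) =
      q ^ ((k : ℝ) + 1) * pqBinomR p q x (k + 1) + p ^ (x - k) * pqBinomR p q x k := by
  have hk : pqNum p q (k + 1) ≠ 0 := (pqNum_pos hq hqp (by positivity)).ne'
  have hadd := pqNum_add (hq.trans hqp) hq (x - k) (k + 1)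
  rw [show x - k + (k + 1) = x + 1 by ring] at hadd
  rw [pqBinomR, pqFacOrd_succ', hadd, pqBinomR, pqBinomR, pqFacOrd_succ, pqFac_succ]
  field_simp
  ring

theorem tendsto_rpow_natCast_add_atTop_zero {t : ℝ} (ht0 : 0 < t) (ht1 : t < 1) (c : ℝ) :
    Tendsto (fun κ : ℕ => t ^ ((κ : ℝ) + c)) atTop (𝓝 0) :=
  (tendsto_rpow_atTop_of_base_lt_one t (by linarith) ht1).comp
    (tendsto_atTop_add_const_right _ c tendsto_natCast_atTop_atTop)

theorem tendsto_pqNum_add_div_rpow (hq : 0 < q) (hqp : q < p) (c : ℝ) :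
    Tendsto (fun κ : ℕ => pqNum p q (κ + c) / p ^ ((κ : ℝ) + c)) atTop (𝓝 (p - q)⁻¹) := by
  have hp := hq.trans hqp
  have ht := tendsto_rpow_natCast_add_atTop_zero (div_pos hq hp) ((div_lt_one hp).2 hqp) c
  have hlim := (ht.const_sub 1).div_const (p - q)
  rw [sub_zero, one_div] at hlim
  refine hlim.congr fun κ => ?_
  have := (rpow_pos_of_pos hp ((κ : ℝ) + c)).ne'
  rw [pqNum, div_rpow hq.le hp.le]
  field_simp

theorem tendsto_rpow_sub_mul_pqNum_sub (hq : 0 < q) (hqp : q < p) (c : ℝ) :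
    Tendsto (fun κ : ℕ => q ^ ((κ : ℝ) - c) * pqNum p q (c - κ)) atTop (𝓝 (-(p - q)⁻¹)) := by
  have hp := hq.trans hqp
  have ht := tendsto_rpow_natCast_add_atTop_zero (div_pos hq hp) ((div_lt_one hp).2 hqp) (-c)
  have hlim := (ht.sub_const 1).div_const (p - q)
  rw [zero_sub, neg_div, one_div] at hlim
  refine hlim.congr fun κ => ?_
  have := (rpow_pos_of_pos hp ((κ : ℝ) - c)).ne'
  rw [pqNum, ← sub_eq_add_neg, div_rpow hq.le hp.le, show c - κ = -((κ : ℝ) - c) by ring,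
    rpow_neg hp.le, rpow_neg hq.le]
  field_simp

end PQNumber

theorem summable_of_eq_mul_of_tendsto {𝕜 : Type*} [NormedField 𝕜] [CompleteSpace 𝕜]
    {f r : ℕ → 𝕜} {L : 𝕜} (hf : ∀ n, f (n + 1) = f n * r n) (hr : Tendsto r atTop (𝓝 L))
    (hL : ‖L‖ < 1) : Summable f := by
  obtain ⟨ρ, hLρ, hρ⟩ := exists_between hL
  refine summable_of_ratio_norm_eventually_le hρ ?_
  filter_upwards [hr.norm.eventually (gt_mem_nhds hLρ)] with n hn
  rw [hf, norm_mul, mul_comm]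
  exact mul_le_mul_of_nonneg_right hn.le (norm_nonneg _)

section VandermondeTerm

noncomputable def vandermondeTerm (p q u v : ℝ) (n κ : ℕ) : ℝ :=
  pqBinomR p q (-(n : ℝ)) κ * p ^ (-(((n : ℝ) + (κ : ℝ)) * (u - (κ : ℝ))))
    * q ^ ((κ : ℝ) * (v + (n : ℝ) + (κ : ℝ))) * pqFacOrd p q u κ
    / ∏ i ∈ Finset.range (n + κ), pqNum p q (v + ((i : ℝ) + 1))

noncomputable def vandermondeRatio (p q u v : ℝ) (n κ : ℕ) : ℝ :=
  pqNum p q (-n - κ) * pqNum p q (u - κ) / (pqNum p q (κ + 1) * pqNum p q (κ + (v + n + 1)))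
    * (p ^ ((n : ℝ) + 2 * κ + 1 - u) * q ^ (v + n + 2 * κ + 1))

variable {p q u v : ℝ}

theorem vandermondeTerm_contiguous_zero (hq : 0 < q) (hqp : q < p)
    (hv : ∀ i : ℕ, 1 ≤ i → v + (i : ℝ) ≠ 0) (n : ℕ) :
    vandermondeTerm p q u v n 0 =
      p ^ u * pqNum p q (v + n + 1) * vandermondeTerm p q u v (n + 1) 0 := by
  have hp := hq.trans hqp
  have hvn : pqNum p q (v + n + 1) ≠ 0 :=
    pqNum_ne_zero hq hqp (by simpa [add_assoc] using hv (n + 1) (by omega))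
  simp only [vandermondeTerm, pqBinomR, pqFacOrd, pqFac, range_zero, prod_empty,
    prod_range_succ, CharP.cast_eq_zero, add_zero, sub_zero, zero_mul, rpow_zero]
  push_cast
  rw [rpow_add_of_eq hp (show -(n * u) = -((n + 1) * u) + u by ring),
    show v + (n + 1) = v + n + 1 by ring]
  field_simp

theorem vandermondeTerm_contiguous_succ (hq : 0 < q) (hqp : q < p)
    (hv : ∀ i : ℕ, 1 ≤ i → v + (i : ℝ) ≠ 0) (n κ : ℕ) :
    vandermondeTerm p q u v n (κ + 1) =
      p ^ (u - (κ + 1)) * pqNum p q (v + n + (κ + 1) + 1)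
          * vandermondeTerm p q u v (n + 1) (κ + 1)
        + q ^ (v + n + κ + 1) * pqNum p q (u - κ) * vandermondeTerm p q u v (n + 1) κ := by
  have hp := hq.trans hqp
  have hvn : pqNum p q (v + n + (κ + 1) + 1) ≠ 0 :=
    pqNum_ne_zero hq hqp (by convert hv (n + κ + 2) (by omega) using 1; push_cast; ring)
  have hbinom := pqBinomR_succ_succ hq hqp (-((n + 1 : ℕ) : ℝ)) κ
  rw [show -((n + 1 : ℕ) : ℝ) + 1 = -(n : ℝ) by push_cast; ring] at hbinom
  simp only [vandermondeTerm, hbinom, pqFacOrd_succ, show n + (κ + 1) = n + 1 + κ by omega,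
    show n + 1 + (κ + 1) = n + 1 + κ + 1 by omega, prod_range_succ]
  push_cast
  rw [show v + (n + 1 + κ + 1) = v + n + (κ + 1) + 1 by ring,
    rpow_sub_of_eq hp (show -((n + 1 + (κ + 1)) * (u - (κ + 1))) =
      -((n + (κ + 1)) * (u - (κ + 1))) - (u - (κ + 1)) by ring),
    rpow_add_of_eq hq (show (κ + 1) * (v + (n + 1) + (κ + 1)) =
      (κ + 1) + (κ + 1) * (v + n + (κ + 1)) by ring),
    rpow_add_of_eq hp (show -((n + 1 + κ) * (u - κ)) =
      (-(n + 1) - κ) + -((n + (κ + 1)) * (u - (κ + 1))) by ring),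
    rpow_sub_of_eq hq (show κ * (v + (n + 1) + κ) =
      (κ + 1) * (v + n + (κ + 1)) - (v + n + κ + 1) by ring)]
  field_simp

theorem vandermondeTerm_succ_eq_mul_ratio (hq : 0 < q) (hqp : q < p) (n κ : ℕ) :
    vandermondeTerm p q u v n (κ + 1) =
      vandermondeTerm p q u v n κ * vandermondeRatio p q u v n κ := by
  have hp := hq.trans hqp
  simp only [vandermondeTerm, vandermondeRatio, pqBinomR, pqFacOrd_succ, pqFac_succ,
    ← add_assoc n κ 1, prod_range_succ]
  push_cast
  rw [show v + (n + κ + 1) = κ + (v + n + 1) by ring,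
    rpow_add_of_eq hp (show -((n + (κ + 1)) * (u - (κ + 1))) =
      -((n + κ) * (u - κ)) + (n + 2 * κ + 1 - u) by ring),
    rpow_add_of_eq hq (show (κ + 1) * (v + n + (κ + 1)) =
      κ * (v + n + κ) + (v + n + 2 * κ + 1) by ring)]
  field_simp

theorem vandermondeRatio_eq (hq : 0 < q) (hqp : q < p) (n κ : ℕ) :
    vandermondeRatio p q u v n κ =
      (q ^ ((κ : ℝ) - -n) * pqNum p q (-n - κ)) * (q ^ ((κ : ℝ) - u) * pqNum p q (u - κ))
        / (pqNum p q (κ + 1) / p ^ ((κ : ℝ) + 1)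
          * (pqNum p q (κ + (v + n + 1)) / p ^ ((κ : ℝ) + (v + n + 1))))
        * (q / p) ^ (u + v + 1) := by
  have hp := hq.trans hqp
  rw [vandermondeRatio, div_rpow hq.le hp.le,
    rpow_sub_of_eq hp (show (n : ℝ) + 2 * κ + 1 - u =
      (κ + 1) + (κ + (v + n + 1)) - (u + v + 1) by ring),
    rpow_add hp ((κ : ℝ) + 1),
    rpow_add_of_eq hq (show v + n + 2 * κ + 1 =
      ((κ : ℝ) - -n + (κ - u)) + (u + v + 1) by ring),
    rpow_add hq ((κ : ℝ) - -n)]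
  field_simp

theorem tendsto_vandermondeRatio (hq : 0 < q) (hqp : q < p) (n : ℕ) :
    Tendsto (vandermondeRatio p q u v n) atTop (𝓝 ((q / p) ^ (u + v + 1))) := by
  have hpq : (p - q)⁻¹ ≠ 0 := inv_ne_zero (sub_pos.2 hqp).ne'
  have hlim := (((tendsto_rpow_sub_mul_pqNum_sub hq hqp (-n)).mul
    (tendsto_rpow_sub_mul_pqNum_sub hq hqp u)).div
    ((tendsto_pqNum_add_div_rpow hq hqp 1).mul (tendsto_pqNum_add_div_rpow hq hqp (v + n + 1)))
    (mul_ne_zero hpq hpq)).mul_const ((q / p) ^ (u + v + 1))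
  rw [neg_mul_neg, div_self (mul_ne_zero hpq hpq), one_mul] at hlim
  exact hlim.congr fun κ => (vandermondeRatio_eq hq hqp n κ).symm

theorem summable_vandermondeTerm (hq : 0 < q) (hqp : q < p) (huv1 : 0 < u + v + 1) (n : ℕ) :
    Summable (vandermondeTerm p q u v n) := by
  have hp := hq.trans hqp
  refine summable_of_eq_mul_of_tendsto (vandermondeTerm_succ_eq_mul_ratio hq hqp n)
    (tendsto_vandermondeRatio hq hqp n) ?_
  rw [norm_of_nonneg (by positivity)]
  exact rpow_lt_one (by positivity) ((div_lt_one hp).2 hqp) huv1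

theorem hasSum_vandermondeTerm_of_hasSum_succ (hq : 0 < q) (hqp : q < p)
    (hv : ∀ i : ℕ, 1 ≤ i → v + (i : ℝ) ≠ 0) (n : ℕ) {T : ℝ}
    (hT : HasSum (vandermondeTerm p q u v (n + 1)) T) :
    HasSum (vandermondeTerm p q u v n) (pqNum p q (u + v + n + 1) * T) := by
  have hp := hq.trans hqp
  set W := vandermondeTerm p q u v (n + 1)
  set a : ℕ → ℝ := fun κ => p ^ (u - κ) * pqNum p q (v + n + κ + 1) * W κ
  set b : ℕ → ℝ := fun κ => q ^ (v + n + κ + 1) * pqNum p q (u - κ) * W κ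
  have hab (κ : ℕ) : a κ + b κ = pqNum p q (u + v + n + 1) * W κ := by
    rw [show u + v + n + 1 = (u - κ) + (v + n + κ + 1) by ring, pqNum_add hp hq]
    ring
  obtain ⟨Sb, hSb⟩ : Summable b := by
    have hlim := (tendsto_rpow_sub_mul_pqNum_sub hq hqp u).const_mul (q ^ (u + v + n + 1))
    rw [← Nat.cofinite_eq_atTop] at hlim
    refine (Summable.mul_tendsto_const (f := W) hT.summable.abs hlim).congr fun κ => ?_
    simp only [b]
    rw [rpow_add_of_eq hq (show v + n + κ + 1 = (u + v + n + 1) + (κ - u) by ring)]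
    ring
  have ha : HasSum a (pqNum p q (u + v + n + 1) * T - Sb) :=
    ((hT.mul_left _).sub hSb).congr_fun fun κ => by rw [← hab]; ring
  have hshift := ((hasSum_nat_add_iff' 1).2 ha).add hSb
  refine (hasSum_nat_add_iff' 1).1 ?_
  convert hshift using 1
  · funext κ
    rw [vandermondeTerm_contiguous_succ hq hqp hv]
    simp only [a, b, W]
    push_cast
    ring
  · rw [sum_range_one, sum_range_one, vandermondeTerm_contiguous_zero hq hqp hv]
    simp only [a, W, CharP.cast_eq_zero, sub_zero, add_zero]
    ring

theorem hasSum_vandermondeTerm_zero : HasSum (vandermondeTerm p q u v 0) 1 := by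
  convert hasSum_single 0 fun κ hκ => ?_
  · simp [vandermondeTerm, pqBinomR, pqFacOrd, pqFac]
  · obtain ⟨κ, rfl⟩ := Nat.exists_eq_succ_of_ne_zero hκ
    simp [vandermondeTerm, pqBinomR, pqFacOrd, prod_range_succ', pqNum]

theorem hasSum_vandermondeTerm (hq : 0 < q) (hqp : q < p) (huv1 : 0 < u + v + 1)
    (hv : ∀ i : ℕ, 1 ≤ i → v + (i : ℝ) ≠ 0) (n : ℕ) :
    HasSum (vandermondeTerm p q u v n) (1 / ∏ i ∈ range n, pqNum p q (u + v + (i + 1))) := by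
  induction n with
  | zero => simpa using hasSum_vandermondeTerm_zero
  | succ n ih =>
    obtain ⟨T, hT⟩ := summable_vandermondeTerm hq hqp huv1 (n + 1)
    have hc : pqNum p q (u + v + n + 1) ≠ 0 :=
      (pqNum_pos hq hqp (by linarith [n.cast_nonneg (α := ℝ)])).ne'
    have hsum := (hasSum_vandermondeTerm_of_hasSum_succ hq hqp hv n hT).unique ih
    rw [prod_range_succ, ← add_assoc, one_div, mul_inv, ← one_div, ← hsum]
    field_simp
    simpa

end VandermondeTerm

theorem pq_negative_vandermonde_series_general (p q : ℝ) (hq : 0 < q) (hqp : q < p)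
    (n : ℕ) (u v : ℝ) (huv1 : 0 < u + v + 1)
    (hv : ∀ i : ℕ, 1 ≤ i → v + (i : ℝ) ≠ 0) :
    HasSum
      (fun κ : ℕ =>
        pqBinomR p q (-(n : ℝ)) κ * p ^ (-(((n : ℝ) + (κ : ℝ)) * (u - (κ : ℝ))))
          * q ^ ((κ : ℝ) * (v + (n : ℝ) + (κ : ℝ)))
          * pqFacOrd p q u κ
          / ∏ i ∈ Finset.range (n + κ), pqNum p q (v + ((i : ℝ) + 1)))
      (1 / ∏ i ∈ Finset.range n, pqNum p q (u + v + ((i : ℝ) + 1))) :=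
  hasSum_vandermondeTerm hq hqp huv1 hv n

/-- The negative (p,q)-deformed Vandermonde formula as a convergent series. -/
theorem pq_negative_vandermonde_series (p q : ℝ) (hq : 0 < q) (hqp : q < p) (hp : p ≤ 1)
    (n : ℕ) (hn : 0 < n) (u v : ℝ) (huv1 : 0 < u + v + 1)
    (hv : ∀ i : ℕ, 1 ≤ i → v + (i : ℝ) ≠ 0)
    (huv : ∀ i : ℕ, 1 ≤ i → i ≤ n → u + v + (i : ℝ) ≠ 0) :
    HasSum
      (fun κ : ℕ =>
        pqBinomR p q (-(n : ℝ)) κ * p ^ (-(((n : ℝ) + (κ : ℝ)) * (u - (κ : ℝ))))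
          * q ^ ((κ : ℝ) * (v + (n : ℝ) + (κ : ℝ)))
          * pqFacOrd p q u κ
          / ∏ i ∈ Finset.range (n + κ), pqNum p q (v + ((i : ℝ) + 1)))
      (1 / ∏ i ∈ Finset.range n, pqNum p q (u + v + ((i : ℝ) + 1))) :=
  pq_negative_vandermonde_series_general p q hq hqp n u v huv1 hv
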